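/- arXiv:1605.09039 — 3 statements merged into one kernel-verified Lean document; each statement's English description precedes it below -/
import Mathlib

section
/- For every positive integer m there is a finite constant C_m, depending only on m, with the following property. Let Y_1, ..., Y_k be independent real random variables with E[Y_j] = 0 for each j, and suppose there are nonnegative reals N_1, ..., N_k with |Y_j| ≤ N_j almost surely for each j. Then E[(Y_1 + ... + Y_k)^{2m}] ≤ C_m · (max_{1≤j≤k} N_j)^m · (N_1 + ... + N_k)^m. -/
/-
A centered variable with |Y| ≤ N is sub-Gaussian with variance proxy N² (Hoeffding's lemma), so by
independence the sum S is sub-Gaussian with proxy σ² = ∑ N_j² ≤ (max_j N_j) · ∑ N_j. Comparing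
x^(2m)/(2m)! with cosh x and evaluating the moment-generating-function bound at t = 1/σ gives
E[S^(2m)] ≤ 2 e^(1/2) (2m)! σ^(2m).
-/

open MeasureTheory ProbabilityTheory

open Real Nat in
theorem Real.pow_two_mul_le_factorial_mul_exp_add_exp_neg (x : ℝ) (m : ℕ) :
    x ^ (2 * m) ≤ (2 * m)! * (exp x + exp (-x)) := by
  have hfact : (0 : ℝ) < (2 * m)! := mod_cast factorial_pos _
  have h_abs : exp |x| ≤ exp x + exp (-x) := by
    rcases abs_choice x with h | h <;> rw [h] <;> linarith [exp_pos x, exp_pos (-x)]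
  calc x ^ (2 * m) = |x| ^ (2 * m) := ((even_two_mul m).pow_abs x).symm
    _ ≤ (2 * m)! * exp |x| := by
      rw [← div_le_iff₀' hfact]
      exact pow_div_factorial_le_exp |x| (abs_nonneg x) _
    _ ≤ (2 * m)! * (exp x + exp (-x)) := by gcongr

theorem Finset.sum_sq_le_sup'_mul_sum {ι : Type*} {s : Finset ι} (hs : s.Nonempty) {f : ι → ℝ}
    (hf : ∀ i ∈ s, 0 ≤ f i) : ∑ i ∈ s, f i ^ 2 ≤ s.sup' hs f * ∑ i ∈ s, f i := by
  rw [Finset.mul_sum]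
  refine Finset.sum_le_sum fun i hi ↦ ?_
  rw [sq]
  exact mul_le_mul_of_nonneg_right (Finset.le_sup' f hi) (hf i hi)

namespace ProbabilityTheory

open Real Nat

variable {Ω : Type*} {mΩ : MeasurableSpace Ω} {μ : Measure Ω} {X : Ω → ℝ} {c : NNReal}

theorem hasSubgaussianMGF_of_abs_le_of_integral_eq_zero [IsProbabilityMeasure μ] {N : ℝ}
    (hm : AEMeasurable X μ) (hb : ∀ᵐ ω ∂μ, |X ω| ≤ N) (hc : μ[X] = 0) :
    HasSubgaussianMGF X (‖N‖₊ ^ 2) μ := by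
  have h := hasSubgaussianMGF_of_mem_Icc_of_integral_eq_zero hm
    (hb.mono fun ω hω ↦ Set.mem_Icc.2 (abs_le.1 hω)) hc
  rwa [sub_neg_eq_add, ← two_mul, nnnorm_mul, nnnorm_two, mul_div_cancel_left₀ _ two_ne_zero] at h

namespace HasSubgaussianMGF

theorem pow_two_mul_mul_integral_le (h : HasSubgaussianMGF X c μ) (t : ℝ) (m : ℕ) :
    t ^ (2 * m) * ∫ ω, X ω ^ (2 * m) ∂μ ≤ 2 * (2 * m)! * exp (c * t ^ 2 / 2) := by
  have h_int : Integrable (fun ω ↦ (2 * m)! * (exp (t * X ω) + exp (-t * X ω))) μ :=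
    ((h.integrable_exp_mul t).add (h.integrable_exp_mul (-t))).const_mul _
  calc t ^ (2 * m) * ∫ ω, X ω ^ (2 * m) ∂μ = ∫ ω, (t * X ω) ^ (2 * m) ∂μ := by
        rw [← integral_const_mul]
        simp_rw [mul_pow]
    _ ≤ ∫ ω, (2 * m)! * (exp (t * X ω) + exp (-t * X ω)) ∂μ := by
        refine integral_mono_of_nonneg (ae_of_all _ fun ω ↦ ?_) h_int (ae_of_all _ fun ω ↦ ?_)
        · exact (even_two_mul m).pow_nonneg _
        · simpa [neg_mul] using pow_two_mul_le_factorial_mul_exp_add_exp_neg (t * X ω) m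
    _ = (2 * m)! * (mgf X μ t + mgf X μ (-t)) := by
        rw [integral_const_mul, integral_add (h.integrable_exp_mul t) (h.integrable_exp_mul (-t))]
        rfl
    _ ≤ (2 * m)! * (exp (c * t ^ 2 / 2) + exp (c * (-t) ^ 2 / 2)) := by
        gcongr <;> exact h.mgf_le _
    _ = 2 * (2 * m)! * exp (c * t ^ 2 / 2) := by
        rw [neg_sq]
        ring

theorem integral_pow_two_mul_le [IsProbabilityMeasure μ] (h : HasSubgaussianMGF X c μ) (m : ℕ) :
    ∫ ω, X ω ^ (2 * m) ∂μ ≤ 2 * exp (1 / 2) * (2 * m)! * c ^ m := by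
  rcases eq_or_ne c 0 with rfl | hc
  · have h_zero : (fun ω ↦ X ω ^ (2 * m)) =ᵐ[μ] fun _ ↦ (0 : ℝ) ^ (2 * m) := by
      filter_upwards [h.ae_eq_zero_of_hasSubgaussianMGF_zero] with ω hω
      rw [hω, Pi.zero_apply]
    rw [integral_congr_ae h_zero]
    rcases m.eq_zero_or_pos with rfl | hm
    · simp only [mul_zero, pow_zero, one_div, factorial_zero, cast_one, mul_one, integral_const,
        probReal_univ, smul_eq_mul]
      linarith [add_one_le_exp (1 / 2 : ℝ)]
    · simp [hm.ne']
  · have hc : (0 : ℝ) < c := by positivity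
    have h_bound := h.pow_two_mul_mul_integral_le (√c)⁻¹ m
    rw [pow_mul, inv_pow, sq_sqrt hc.le, inv_pow, ← div_eq_inv_mul, div_le_iff₀ (by positivity),
      mul_inv_cancel₀ hc.ne'] at h_bound
    linarith

end HasSubgaussianMGF

end ProbabilityTheory

theorem moment_bound_indep_bounded_general
    (m : ℕ) :
    ∃ C : ℝ, ∀ (Ω : Type) (_ : MeasurableSpace Ω) (μ : Measure Ω),
      IsProbabilityMeasure μ →
      ∀ (k : ℕ) (hk : 0 < k) (Y : Fin k → Ω → ℝ) (N : Fin k → ℝ),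
        (∀ j, Measurable (Y j)) →
        iIndepFun Y μ →
        (∀ j, ∫ ω, Y j ω ∂μ = 0) →
        (∀ j, 0 ≤ N j) →
        (∀ j, ∀ᵐ ω ∂μ, |Y j ω| ≤ N j) →
        ∫ ω, (∑ j, Y j ω) ^ (2 * m) ∂μ ≤
          C * (Finset.univ.sup' (Finset.univ_nonempty_iff.mpr ⟨⟨0, hk⟩⟩) N) ^ m *
            (∑ j, N j) ^ m := by
  refine ⟨2 * Real.exp (1 / 2) * (2 * m).factorial, ?_⟩
  intro Ω _ μ _ k hk Y N hmeas hindep hmean hN hbd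
  have h_sum : HasSubgaussianMGF (fun ω ↦ ∑ j, Y j ω) (∑ j, ‖N j‖₊ ^ 2) μ :=
    HasSubgaussianMGF.sum_of_iIndepFun hindep fun j _ ↦
      hasSubgaussianMGF_of_abs_le_of_integral_eq_zero (hmeas j).aemeasurable (hbd j) (hmean j)
  have h_proxy : ((∑ j, ‖N j‖₊ ^ 2 : NNReal) : ℝ) ≤
      Finset.univ.sup' (Finset.univ_nonempty_iff.mpr ⟨⟨0, hk⟩⟩) N * ∑ j, N j := by
    push_cast
    simp only [Real.norm_eq_abs, sq_abs]
    exact Finset.sum_sq_le_sup'_mul_sum _ fun j _ ↦ hN j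
  calc ∫ ω, (∑ j, Y j ω) ^ (2 * m) ∂μ
      ≤ 2 * Real.exp (1 / 2) * (2 * m).factorial * ((∑ j, ‖N j‖₊ ^ 2 : NNReal) : ℝ) ^ m :=
        h_sum.integral_pow_two_mul_le m
    _ ≤ 2 * Real.exp (1 / 2) * (2 * m).factorial *
          (Finset.univ.sup' (Finset.univ_nonempty_iff.mpr ⟨⟨0, hk⟩⟩) N * ∑ j, N j) ^ m := by
        gcongr
    _ = _ := by ring

/-- For every `m ≥ 1` there is a constant `C_m` such that for any independent
centered random variables `Y₁, …, Y_k` with `|Y_j| ≤ N_j` a.s.,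
`E[(Y₁ + ⋯ + Y_k)^{2m}] ≤ C_m (max_j N_j)^m (N₁ + ⋯ + N_k)^m`. -/
theorem moment_bound_indep_bounded
    (m : ℕ) (hm : 0 < m) :
    ∃ C : ℝ, ∀ (Ω : Type) (_ : MeasurableSpace Ω) (μ : Measure Ω),
      IsProbabilityMeasure μ →
      ∀ (k : ℕ) (hk : 0 < k) (Y : Fin k → Ω → ℝ) (N : Fin k → ℝ),
        (∀ j, Measurable (Y j)) →
        iIndepFun Y μ →
        (∀ j, ∫ ω, Y j ω ∂μ = 0) →
        (∀ j, 0 ≤ N j) →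
        (∀ j, ∀ᵐ ω ∂μ, |Y j ω| ≤ N j) →
        ∫ ω, (∑ j, Y j ω) ^ (2 * m) ∂μ ≤
          C * (Finset.univ.sup' (Finset.univ_nonempty_iff.mpr ⟨⟨0, hk⟩⟩) N) ^ m *
            (∑ j, N j) ^ m :=
  moment_bound_indep_bounded_general m
end

section
/- For every positive integer m there is a finite constant C_m, depending only on m, with the following property. Let I be a finite nonempty set, let R ⊆ I × I be a symmetric relation with (i,i) ∈ R for all i ∈ I, and let L = max_{i∈I} |{j ∈ I : (i,j) ∈ R}|. Let (Y_i)_{i∈I} be real random variables with |Y_i| ≤ 1 almost surely and E[Y_i] = 0 for each i, and suppose that for each i ∈ I, the random variable Y_i is independent of the family (Y_j : j ∈ I, (i,j) ∉ R). Then E[(Σ_{i∈I} Y_i)^{2m}] ≤ C_m · (|I| · L)^m. -/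
/-!
Expanding the power, `E[(∑ Y_i)^(2m)] = ∑_k E[Y_{k 1} ⋯ Y_{k (2m)}]` over tuples `k` of indices.
A term vanishes as soon as some position of `k` is `R`-related to no other position (factor
out that `Y` by independence; it is centred), and is at most `1` otherwise. The remaining tuples
hang on a forest of parent pointers between positions with at most `m` roots, built from a
maximal matching of the relation between positions: roots take any of `|I|` values and every
other position one of at most `L` values related to its parent's, so there are at most
`(2m)^(2m) 3^(2m) (|I| L)^m` of them.
-/

open MeasureTheory ProbabilityTheory Finset

/-- A maximal matching of `A` inside `T`: `V` is the set of matched vertices, `S` contains one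
endpoint of each matching edge and `τ` sends the other endpoint to its partner. -/
theorem exists_maximal_matching {β : Type*} [DecidableEq β] {A : β → β → Prop}
    (hA : ∀ p q, A p q → A q p) (T : Finset β) :
    ∃ (S V : Finset β) (τ : β → β), S ⊆ V ∧ V ⊆ T ∧ #V = 2 * #S ∧
      (∀ p ∈ V \ S, A p (τ p) ∧ τ p ∈ S) ∧
      ∀ p ∈ T, ∀ q ∈ T, p ≠ q → A p q → p ∈ V ∨ q ∈ V := by
  induction T using Finset.strongInduction with
  | _ T ih =>
  by_cases hedge : ∃ p ∈ T, ∃ q ∈ T, p ≠ q ∧ A p q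
  · obtain ⟨p, hp, q, hq, hpq, hApq⟩ := hedge
    have hsub : (T.erase p).erase q ⊂ T :=
      (erase_subset _ _).trans_ssubset (erase_ssubset hp)
    obtain ⟨S, V, τ, hSV, hVT, hcard, hτ, hmax⟩ := ih _ hsub
    have hpV : p ∉ V := fun h => by simpa using hVT h
    have hqV : q ∉ V := fun h => by simpa using hVT h
    refine ⟨insert p S, insert p (insert q V), Function.update τ q p, ?_, ?_, ?_, ?_, ?_⟩
    · exact insert_subset_insert _ (hSV.trans (subset_insert _ _))
    · exact insert_subset hp <| insert_subset hq <|
        hVT.trans ((erase_subset _ _).trans (erase_subset _ _))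
    · rw [card_insert_of_notMem (by simp [hpq, hpV]), card_insert_of_notMem hqV,
        card_insert_of_notMem fun h => hpV (hSV h), hcard]
      ring
    · intro x hx
      simp only [mem_sdiff, mem_insert, not_or] at hx
      obtain ⟨rfl | rfl | hxV, hxp, hxS⟩ := hx
      · exact absurd rfl hxp
      · simp [hA _ _ hApq]
      · have hxq : x ≠ q := fun h => hqV (h ▸ hxV)
        simpa [Function.update_of_ne hxq] using (hτ x (mem_sdiff.2 ⟨hxV, hxS⟩)).imp_right Or.inr
    · intro u hu v hv huv hAuv
      by_cases hu' : u = p ∨ u = q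
      · left; rcases hu' with rfl | rfl <;> simp
      by_cases hv' : v = p ∨ v = q
      · right; rcases hv' with rfl | rfl <;> simp
      push Not at hu' hv'
      have := hmax u (by simp [hu', hu]) v (by simp [hv', hv]) huv hAuv
      simp only [mem_insert]
      tauto
  · push Not at hedge
    exact ⟨∅, ∅, id, by simp, by simp, by simp, by simp,
      fun p hp q hq hpq h => absurd h (hedge p hp q hq hpq)⟩

/-- Roots (rank `0`) are the vertices of `S` of a maximal matching, their partners (rank `1`)
point to them, and unmatched vertices (rank `2`) point to a matched neighbour, which exists by
maximality. -/
theorem exists_parent_rank_card_le {β : Type*} [Fintype β] [DecidableEq β] {A : β → β → Prop}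
    (hA : ∀ p q, A p q → A q p) (h : ∀ p, ∃ q, q ≠ p ∧ A p q) :
    ∃ (σ : β → β) (ρ : β → Fin 3), (∀ p, ρ (σ p) < ρ p → A (σ p) p) ∧
      Fintype.card β ≤ 2 * #{p | ρ (σ p) < ρ p} := by
  obtain ⟨S, V, τ, hSV, -, hcard, hτ, hmax⟩ := exists_maximal_matching hA univ
  have hout : ∀ p ∉ V, ∃ q ∈ V, A p q := by
    intro p hp
    obtain ⟨q, hqp, hpq⟩ := h p
    exact ⟨q, (hmax p (mem_univ _) q (mem_univ _) hqp.symm hpq).resolve_left hp, hpq⟩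
  choose π hπV hπA using hout
  let σ p := if hp : p ∈ V then τ p else π p hp
  let ρ : β → Fin 3 := fun p => if p ∈ S then 0 else if p ∈ V then 1 else 2
  have hroot : ∀ p, (ρ (σ p) < ρ p ↔ p ∉ S) ∧ (p ∉ S → A (σ p) p) := by
    intro p
    by_cases hpS : p ∈ S
    · simp [ρ, hpS]
    by_cases hpV : p ∈ V
    · obtain ⟨hA', hτS⟩ := hτ p (mem_sdiff.2 ⟨hpV, hpS⟩)
      simp [ρ, σ, hpS, hpV, hτS, hA _ _ hA']
    · have hσp : σ p = π p hpV := dif_neg hpV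
      refine ⟨?_, fun _ => hσp ▸ hA _ _ (hπA p hpV)⟩
      simp only [ρ, hσp, hπV p hpV, hpS, hpV, if_false]
      split_ifs <;> decide
  refine ⟨σ, ρ, fun p hp => (hroot p).2 ((hroot p).1.1 hp), ?_⟩
  have : #{p | ρ (σ p) < ρ p} = #Sᶜ := by
    congr 1; ext p; simp [(hroot p).1]
  rw [this, card_compl]
  have := card_le_univ V
  omega

section Counting

variable {β ι : Type*} [Fintype β] [DecidableEq β] [Fintype ι]
  (R : ι → ι → Prop) [DecidableRel R] {L : ℕ}

theorem card_filter_and_rel_mul_card_le (hL : ∀ i, #{j | R i j} ≤ L)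
    (Q : (β → ι) → Prop) [DecidablePred Q] {a b : β} (hba : b ≠ a)
    (hQ : ∀ g c, Q (Function.update g a c) ↔ Q g) :
    #{g | Q g ∧ R (g b) (g a)} * Fintype.card ι ≤ #{g | Q g} * L := by
  calc #{g | Q g ∧ R (g b) (g a)} * Fintype.card ι
      = #(({g | Q g ∧ R (g b) (g a)} : Finset (β → ι)) ×ˢ (univ : Finset ι)) := by
        rw [card_product, card_univ]
    _ ≤ #(({g | Q g} : Finset (β → ι)).sigma fun h => ({j | R (h b) j} : Finset ι)) := by
        refine card_le_card_of_injOn (fun x => ⟨Function.update x.1 a x.2, x.1 a⟩) ?_ ?_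
        · rintro ⟨g, c⟩ hg
          simp only [coe_product, coe_filter, Set.mem_prod, Set.mem_ofPred_eq] at hg
          simp [hQ, Function.update_of_ne hba, hg.1.2]
        · rintro ⟨g, c⟩ - ⟨g', c'⟩ - h
          simp only [Sigma.mk.injEq, heq_eq_eq] at h
          obtain ⟨hupd, hga⟩ := h
          have hc : c = c' := by simpa using congrFun hupd a
          subst hc
          simp only [Prod.mk.injEq, and_true]
          funext x
          by_cases hx : x = a
          · subst hx; exact hga
          · simpa [Function.update_of_ne hx] using congrFun hupd x
    _ ≤ #{g | Q g} * L := by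
        rw [card_sigma, ← smul_eq_mul]
        exact sum_le_card_nsmul _ _ _ fun h _ => hL _

/-- The rank makes the parent pointers acyclic: a constrained position of maximal rank is
nobody's parent, so its value is free up to `L` choices once the others are fixed. -/
theorem card_filter_forall_rel_parent_mul_le {α : Type*} [LinearOrder α]
    (hL : ∀ i, #{j | R i j} ≤ L) (σ : β → β) (ρ : β → α) (P : Finset β)
    (hP : ∀ p ∈ P, ρ (σ p) < ρ p) :
    #{g : β → ι | ∀ p ∈ P, R (g (σ p)) (g p)} * Fintype.card ι ^ #P
      ≤ L ^ #P * Fintype.card ι ^ Fintype.card β := by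
  induction P using Finset.induction_on_max_value ρ with
  | empty => simp
  | insert a s ha hmax ih =>
    have hs : ∀ p ∈ s, ρ (σ p) < ρ p := fun p hp => hP p (mem_insert_of_mem hp)
    have hσa : σ a ≠ a := fun h => (hP a (mem_insert_self a s)).ne (by rw [h])
    have hupd : ∀ g c, (∀ p ∈ s, R (Function.update g a c (σ p)) (Function.update g a c p))
        ↔ ∀ p ∈ s, R (g (σ p)) (g p) := by
      refine fun g c => forall₂_congr fun p hp => ?_
      have hpa : p ≠ a := fun h => ha (h ▸ hp)
      have hσpa : σ p ≠ a := fun h => ((hs p hp).trans_le (hmax p hp)).ne (by rw [h])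
      rw [Function.update_of_ne hpa, Function.update_of_ne hσpa]
    have key := card_filter_and_rel_mul_card_le R hL (fun g => ∀ p ∈ s, R (g (σ p)) (g p)) hσa hupd
    simp only [forall_mem_insert, and_comm (a := R _ _)] at key ⊢
    rw [card_insert_of_notMem ha]
    calc _ = #{g : β → ι | (∀ p ∈ s, R (g (σ p)) (g p)) ∧ R (g (σ a)) (g a)} * Fintype.card ι
          * Fintype.card ι ^ #s := by ring
      _ ≤ #{g : β → ι | ∀ p ∈ s, R (g (σ p)) (g p)} * Fintype.card ι ^ #s * L := by
          rw [mul_right_comm _ _ L]; exact Nat.mul_le_mul_right _ key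
      _ ≤ L ^ #s * Fintype.card ι ^ Fintype.card β * L := Nat.mul_le_mul_right _ (ih hs)
      _ = _ := by ring

theorem le_mul_pow_of_mul_pow_le {x N L m c : ℕ} (hN : 0 < N) (hLN : L ≤ N) (hmc : m ≤ c)
    (h : x * N ^ c ≤ L ^ c * N ^ (2 * m)) : x ≤ (N * L) ^ m := by
  obtain ⟨d, rfl⟩ := Nat.exists_eq_add_of_le hmc
  refine Nat.le_of_mul_le_mul_right (h.trans ?_) (pow_pos hN (m + d))
  calc L ^ (m + d) * N ^ (2 * m) = L ^ d * (N ^ (2 * m) * L ^ m) := by ring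
    _ ≤ N ^ d * (N ^ (2 * m) * L ^ m) := Nat.mul_le_mul_right _ (Nat.pow_le_pow_left hLN d)
    _ = (N * L) ^ m * N ^ (m + d) := by ring

theorem card_filter_forall_exists_ne_rel_le [Nonempty ι] (hL : ∀ i, #{j | R i j} ≤ L)
    (hLN : L ≤ Fintype.card ι) (hR : ∀ i j, R i j → R j i) {m : ℕ}
    (hβ : Fintype.card β = 2 * m) :
    #{k : β → ι | ∀ p, ∃ q, q ≠ p ∧ R (k p) (k q)}
      ≤ (2 * m) ^ (2 * m) * 3 ^ (2 * m) * (Fintype.card ι * L) ^ m := by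
  classical
  let P : (β → β) × (β → Fin 3) → Finset β := fun sr => {p | sr.2 (sr.1 p) < sr.2 p}
  let E : (β → β) × (β → Fin 3) → Finset (β → ι) :=
    fun sr => {k | ∀ p ∈ P sr, R (k (sr.1 p)) (k p)}
  let D : Finset ((β → β) × (β → Fin 3)) := {sr | m ≤ #(P sr)}
  have hcover : ({k | ∀ p, ∃ q, q ≠ p ∧ R (k p) (k q)} : Finset (β → ι)) ⊆ D.biUnion E := by
    intro k hk
    obtain ⟨σ, ρ, hparent, hcard⟩ := exists_parent_rank_card_le
      (A := fun p q => R (k p) (k q)) (fun p q => hR _ _) (mem_filter.1 hk).2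
    have hm : m ≤ #{p | ρ (σ p) < ρ p} := by omega
    refine mem_biUnion.2 ⟨(σ, ρ), mem_filter.2 ⟨mem_univ _, hm⟩, ?_⟩
    exact mem_filter.2 ⟨mem_univ _, fun p hp => hparent p (mem_filter.1 hp).2⟩
  have hE : ∀ sr ∈ D, #(E sr) ≤ (Fintype.card ι * L) ^ m := by
    intro sr hsr
    have := card_filter_forall_rel_parent_mul_le R hL sr.1 sr.2 (P sr)
      fun p hp => (mem_filter.1 hp).2
    rw [hβ] at this
    exact le_mul_pow_of_mul_pow_le Fintype.card_pos hLN (mem_filter.1 hsr).2 this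
  calc #{k : β → ι | ∀ p, ∃ q, q ≠ p ∧ R (k p) (k q)} ≤ #(D.biUnion E) := card_le_card hcover
    _ ≤ ∑ sr ∈ D, #(E sr) := card_biUnion_le
    _ ≤ #D * (Fintype.card ι * L) ^ m := by
        rw [← smul_eq_mul]; exact sum_le_card_nsmul _ _ _ hE
    _ ≤ (2 * m) ^ (2 * m) * 3 ^ (2 * m) * (Fintype.card ι * L) ^ m := by
        gcongr
        calc #D ≤ Fintype.card ((β → β) × (β → Fin 3)) := card_le_univ D
          _ = _ := by simp [hβ]

end Counting

section Moments

variable {Ω ι β : Type*} [MeasurableSpace Ω] {μ : Measure Ω} {Y : ι → Ω → ℝ}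

theorem ae_abs_prod_le_one [Fintype β] (hY : ∀ i, ∀ᵐ ω ∂μ, |Y i ω| ≤ 1) (k : β → ι) :
    ∀ᵐ ω ∂μ, |∏ p, Y (k p) ω| ≤ 1 := by
  filter_upwards [Filter.eventually_all.2 fun p => hY (k p)] with ω hω
  rw [Finset.abs_prod]
  exact prod_le_one (fun p _ => abs_nonneg _) fun p _ => hω p

theorem integral_le_one_of_ae_abs_le_one [IsProbabilityMeasure μ] {f : Ω → ℝ}
    (hf : ∀ᵐ ω ∂μ, |f ω| ≤ 1) : ∫ ω, f ω ∂μ ≤ 1 := by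
  have := norm_integral_le_of_norm_le_const (μ := μ) (f := f) (C := 1)
    (by simpa only [Real.norm_eq_abs] using hf)
  simpa using (le_abs_self _).trans this

theorem integral_sum_pow_eq_sum_integral_prod [IsFiniteMeasure μ] [Fintype ι]
    (hmeas : ∀ i, AEStronglyMeasurable (Y i) μ) (hY : ∀ i, ∀ᵐ ω ∂μ, |Y i ω| ≤ 1) (n : ℕ) :
    ∫ ω, (∑ i, Y i ω) ^ n ∂μ = ∑ k : Fin n → ι, ∫ ω, ∏ p, Y (k p) ω ∂μ := by
  simp_rw [Fintype.sum_pow]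
  refine integral_finsetSum _ fun k _ => Integrable.of_bound ?_ 1 ?_
  · exact Finset.aestronglyMeasurable_fun_prod _ fun p _ => hmeas (k p)
  · simpa only [Real.norm_eq_abs] using ae_abs_prod_le_one hY k

theorem integral_prod_eq_zero_of_indepFun [Fintype β] [DecidableEq β] (R : ι → ι → Prop)
    (hmeas : ∀ i, AEStronglyMeasurable (Y i) μ) (k : β → ι) (p₀ : β)
    (hindep : IndepFun (Y (k p₀)) (fun ω (j : {j // ¬ R (k p₀) j}) => Y j.1 ω) μ)
    (hcent : ∫ ω, Y (k p₀) ω ∂μ = 0) (hk : ∀ p ≠ p₀, ¬ R (k p₀) (k p)) :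
    ∫ ω, ∏ p, Y (k p) ω ∂μ = 0 := by
  let f : ({j // ¬ R (k p₀) j} → ℝ) → ℝ := fun v => ∏ p : {p // p ≠ p₀}, v ⟨k p, hk p p.2⟩
  have hf : Measurable f := Finset.measurable_prod _ fun p _ => measurable_pi_apply _
  have := (hindep.comp measurable_id hf).integral_mul_eq_mul_integral (hmeas _)
    (Finset.aestronglyMeasurable_fun_prod _ fun p _ => hmeas _)
  simp_rw [Fintype.prod_eq_mul_prod_subtype_ne _ p₀]
  exact this.trans (by rw [Function.id_comp, hcent, zero_mul])

end Moments

theorem moment_bound_dependency_graph_general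
    (m : ℕ) :
    ∃ C : ℝ, ∀ (Ω : Type) (_ : MeasurableSpace Ω) (μ : Measure Ω),
      IsProbabilityMeasure μ →
      ∀ (I : Type) (_ : Fintype I) (_ : Nonempty I)
        (R : I → I → Prop) (_ : DecidableRel R) (L : ℕ),
        (∀ i, R i i) →
        (∀ i j, R i j → R j i) →
        L = Finset.univ.sup (fun i => (Finset.univ.filter (fun j => R i j)).card) →
        ∀ (Y : I → Ω → ℝ),
          (∀ i, Measurable (Y i)) →
          (∀ i, ∀ᵐ ω ∂μ, |Y i ω| ≤ 1) →
          (∀ i, ∫ ω, Y i ω ∂μ = 0) →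
          (∀ i, IndepFun (Y i) (fun ω => fun j : {j : I // ¬ R i j} => Y j.1 ω) μ) →
          ∫ ω, (∑ i, Y i ω) ^ (2 * m) ∂μ ≤ C * ((Fintype.card I : ℝ) * L) ^ m := by
  refine ⟨((2 * m) ^ (2 * m) * 3 ^ (2 * m) : ℕ), ?_⟩
  intro Ω _ μ _ I _ _ R _ L _ hsymm hL Y hmeas hbound hcent hindep
  classical
  have hLi : ∀ i, #{j | R i j} ≤ L := fun i => hL ▸ le_sup (f := fun i => #{j | R i j}) (mem_univ i)
  have hLN : L ≤ Fintype.card I := hL ▸ Finset.sup_le fun i _ => card_le_univ _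
  have hasm : ∀ i, AEStronglyMeasurable (Y i) μ := fun i => (hmeas i).aestronglyMeasurable
  rw [integral_sum_pow_eq_sum_integral_prod hasm hbound]
  calc ∑ k : Fin (2 * m) → I, ∫ ω, ∏ p, Y (k p) ω ∂μ
      = ∑ k : Fin (2 * m) → I with ∀ p, ∃ q, q ≠ p ∧ R (k p) (k q), ∫ ω, ∏ p, Y (k p) ω ∂μ := by
        refine (sum_subset (filter_subset _ _) fun k _ hk => ?_).symm
        obtain ⟨p₀, hp₀⟩ : ∃ p₀, ∀ q ≠ p₀, ¬ R (k p₀) (k q) := by simpa using hk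
        exact integral_prod_eq_zero_of_indepFun R hasm k p₀ (hindep _) (hcent _) hp₀
    _ ≤ #{k : Fin (2 * m) → I | ∀ p, ∃ q, q ≠ p ∧ R (k p) (k q)} := by
        simpa using sum_le_sum fun k _ =>
          integral_le_one_of_ae_abs_le_one (μ := μ) (ae_abs_prod_le_one hbound k)
    _ ≤ ((2 * m) ^ (2 * m) * 3 ^ (2 * m) * (Fintype.card I * L) ^ m : ℕ) := by
        exact_mod_cast card_filter_forall_exists_ne_rel_le R hLi hLN hsymm (Fintype.card_fin _)
    _ = _ := by push_cast; ring

/-- For every `m ≥ 1` there is a constant `C_m` such that if `(Y_i)_{i ∈ I}`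
are centered random variables bounded by `1`, and each `Y_i` is independent of the family of
all `Y_j` with `(i,j)` not in the symmetric reflexive dependency relation `R`, and each index
is related to at most `L` indices, then `E[(Σ_i Y_i)^{2m}] ≤ C_m (|I| L)^m`. -/
theorem moment_bound_dependency_graph
    (m : ℕ) (hm : 0 < m) :
    ∃ C : ℝ, ∀ (Ω : Type) (_ : MeasurableSpace Ω) (μ : Measure Ω),
      IsProbabilityMeasure μ →
      ∀ (I : Type) (_ : Fintype I) (_ : Nonempty I)
        (R : I → I → Prop) (_ : DecidableRel R) (L : ℕ),
        (∀ i, R i i) →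
        (∀ i j, R i j → R j i) →
        L = Finset.univ.sup (fun i => (Finset.univ.filter (fun j => R i j)).card) →
        ∀ (Y : I → Ω → ℝ),
          (∀ i, Measurable (Y i)) →
          (∀ i, ∀ᵐ ω ∂μ, |Y i ω| ≤ 1) →
          (∀ i, ∫ ω, Y i ω ∂μ = 0) →
          (∀ i, IndepFun (Y i) (fun ω => fun j : {j : I // ¬ R i j} => Y j.1 ω) μ) →
          ∫ ω, (∑ i, Y i ω) ^ (2 * m) ∂μ ≤ C * ((Fintype.card I : ℝ) * L) ^ m :=
  moment_bound_dependency_graph_general m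
end

section
/- For every positive integer m there is a finite constant C_m, depending only on m, with the following property. Let I be a finite nonempty set, let R ⊆ I × I be a symmetric relation with (i,i) ∈ R for all i ∈ I, and let L = max_{i∈I} |{j ∈ I : (i,j) ∈ R}|. Then the number of tuples (i_1, ..., i_{2m}) ∈ I^{2m} such that for every a ∈ {1, ..., 2m} there exists b ≠ a with (i_a, i_b) ∈ R is at most C_m · |I|^m · L^m. -/
/-!
Join two positions `a ≠ b` of a tuple `f` when `R (f a) (f b)`. For a counted tuple this graph
has no isolated vertex, so by Ore's theorem it has a dominating set `S` of at most `m` positions.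
Once `S` is fixed, the entries indexed by `S` are arbitrary, while every other entry is related
to one of them and so takes at most `|S| L` values. As `L ≤ |I|`, this gives at most
`m^(2m) |I|^m L^m` tuples per `S`, and there are at most `4^m` sets `S`.
-/

open Finset

namespace SimpleGraph

variable {V : Type*}

def IsDominating (G : SimpleGraph V) (S : Finset V) : Prop :=
  ∀ v ∉ S, ∃ s ∈ S, G.Adj s v

variable [Fintype V] [DecidableEq V] {G : SimpleGraph V}

-- If some `s ∈ S` had all its neighbours in `S`, then `S.erase s` would still dominate.
theorem IsDominating.compl_of_forall_card_le {S : Finset V} (hS : G.IsDominating S)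
    (hmin : ∀ T, G.IsDominating T → #S ≤ #T) (hG : ∀ v, ∃ w, G.Adj v w) :
    G.IsDominating Sᶜ := by
  intro s hs
  rw [mem_compl, not_not] at hs
  by_contra! hnb
  have hnb' : ∀ w, G.Adj s w → w ∈ S := fun w hw => by
    by_contra h
    exact hnb w (mem_compl.2 h) hw.symm
  have herase : G.IsDominating (S.erase s) := by
    intro v hv
    by_cases hvs : v = s
    · subst hvs
      obtain ⟨w, hw⟩ := hG v
      exact ⟨w, mem_erase.2 ⟨hw.ne.symm, hnb' w hw⟩, hw.symm⟩
    · have hvS : v ∉ S := fun h => hv (mem_erase.2 ⟨hvs, h⟩)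
      obtain ⟨t, htS, htv⟩ := hS v hvS
      have hts : t ≠ s := by
        rintro rfl
        exact hvS (hnb' v htv)
      exact ⟨t, mem_erase.2 ⟨hts, htS⟩, htv⟩
  have := hmin _ herase
  rw [card_erase_of_mem hs] at this
  have := card_pos.2 ⟨s, hs⟩
  omega

/-- Ore's theorem on the domination number. -/
theorem exists_isDominating_two_mul_card_le (hG : ∀ v, ∃ w, G.Adj v w) :
    ∃ S : Finset V, G.IsDominating S ∧ 2 * #S ≤ Fintype.card V := by
  classical
  obtain ⟨S, hS, hmin⟩ := exists_min_image {S | G.IsDominating S} card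
    ⟨univ, mem_filter.2 ⟨mem_univ _, fun v hv => absurd (mem_univ v) hv⟩⟩
  rw [mem_filter] at hS
  have hmin' : ∀ T, G.IsDominating T → #S ≤ #T := fun T hT => hmin T (by simpa using hT)
  have := hmin' _ (hS.2.compl_of_forall_card_le hmin' hG)
  rw [card_compl] at this
  exact ⟨S, hS.2, by omega⟩

end SimpleGraph

section Counting

variable {α β : Type*} [Fintype α] [DecidableEq α] [Fintype β]

theorem card_filter_forall_notMem_mem_le [DecidableEq β] (S : Finset α)
    (T : (S → β) → Finset β) {K : ℕ} (hT : ∀ g, #(T g) ≤ K) :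
    #{f : α → β | ∀ a ∉ S, f a ∈ T fun s => f s} ≤
      Fintype.card β ^ #S * K ^ (Fintype.card α - #S) := by
  let split (f : α → β) : Σ _ : S → β, (Sᶜ : Finset α) → β := ⟨fun s => f s, fun a => f a⟩
  calc #{f : α → β | ∀ a ∉ S, f a ∈ T fun s => f s}
      ≤ #(univ.sigma fun g => Fintype.piFinset fun _ : (Sᶜ : Finset α) => T g) := by
        refine card_le_card_of_injOn split (fun f hf => ?_) (fun f _ f' _ hff' => ?_)
        · simp only [coe_filter, Set.mem_ofPred_eq, mem_univ, true_and] at hf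
          simp only [split, coe_sigma, Set.mem_sigma_iff, coe_univ, Set.mem_univ, true_and,
            mem_coe, Fintype.mem_piFinset]
          exact fun a => hf a (mem_compl.1 a.2)
        · simp only [split, Sigma.mk.injEq, heq_eq_eq, funext_iff, Subtype.forall] at hff'
          funext a
          by_cases ha : a ∈ S
          · exact hff'.1 a ha
          · exact hff'.2 a (mem_compl.2 ha)
    _ ≤ ∑ _g : S → β, K ^ (Fintype.card α - #S) := by
        rw [card_sigma]
        refine sum_le_sum fun g _ => ?_
        rw [Fintype.card_piFinset, ← card_compl]
        exact (prod_le_pow_card _ _ _ fun a _ => hT g).trans_eq (by simp)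
    _ = Fintype.card β ^ #S * K ^ (Fintype.card α - #S) := by simp

def dominatedTuples (R : β → β → Prop) [DecidableRel R] (S : Finset α) : Finset (α → β) :=
  {f | ∀ a ∉ S, ∃ s ∈ S, R (f s) (f a)}

theorem card_dominatedTuples_le (R : β → β → Prop) [DecidableRel R] {L : ℕ}
    (hL : ∀ i, #{j | R i j} ≤ L) (S : Finset α) :
    #(dominatedTuples R S) ≤ Fintype.card β ^ #S * (#S * L) ^ (Fintype.card α - #S) := by
  classical
  let T (g : S → β) : Finset β := univ.biUnion fun s => {j | R (g s) j}
  have hT (g : S → β) : #(T g) ≤ #S * L :=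
    card_biUnion_le.trans <| (sum_le_card_nsmul _ _ _ fun s _ => hL (g s)).trans_eq (by simp)
  refine le_trans (card_le_card fun f hf => ?_) (card_filter_forall_notMem_mem_le S T hT)
  simp only [dominatedTuples, mem_filter, mem_univ, true_and] at hf ⊢
  intro a ha
  obtain ⟨s, hs, hsa⟩ := hf a ha
  exact mem_biUnion.2 ⟨⟨s, hs⟩, mem_univ _, by simpa using hsa⟩

end Counting

theorem exists_dominating_of_forall_exists_ne {α I : Type*} [Fintype α] [DecidableEq α]
    {R : I → I → Prop} (hR : ∀ i j, R i j → R j i) {f : α → I}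
    (hf : ∀ a, ∃ b, b ≠ a ∧ R (f a) (f b)) :
    ∃ S : Finset α, 2 * #S ≤ Fintype.card α ∧ ∀ a ∉ S, ∃ s ∈ S, R (f s) (f a) := by
  let G := SimpleGraph.fromRel fun a b => R (f a) (f b)
  have hG : ∀ a, ∃ b, G.Adj a b := fun a =>
    let ⟨b, hba, hab⟩ := hf a; ⟨b, (SimpleGraph.fromRel_adj _ _ _).2 ⟨hba.symm, .inl hab⟩⟩
  obtain ⟨S, hS, hcard⟩ := SimpleGraph.exists_isDominating_two_mul_card_le hG
  refine ⟨S, hcard, fun a ha => ?_⟩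
  obtain ⟨s, hs, hsa⟩ := hS a ha
  obtain ⟨-, hsa | has⟩ := (SimpleGraph.fromRel_adj _ _ _).1 hsa
  exacts [⟨s, hs, hsa⟩, ⟨s, hs, hR _ _ has⟩]

theorem pow_mul_mul_pow_sub_le {N L k m : ℕ} (hk : k ≤ m) (hL : L ≤ N) :
    N ^ k * (k * L) ^ (2 * m - k) ≤ m ^ (2 * m) * (N ^ m * L ^ m) := by
  have hkm : k ^ (2 * m - k) ≤ m ^ (2 * m) := by
    rcases m.eq_zero_or_pos with rfl | hm
    · simp [Nat.le_zero.1 hk]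
    · exact (Nat.pow_le_pow_left hk _).trans (Nat.pow_le_pow_right hm (by omega))
  have hNL : N ^ k * L ^ (2 * m - k) ≤ N ^ m * L ^ m := calc
    N ^ k * L ^ (2 * m - k) = N ^ k * L ^ (m - k) * L ^ m := by
      rw [mul_assoc, ← pow_add, show m - k + m = 2 * m - k by omega]
    _ ≤ N ^ k * N ^ (m - k) * L ^ m := by gcongr
    _ = N ^ m * L ^ m := by rw [← pow_add, Nat.add_sub_cancel' hk]
  calc N ^ k * (k * L) ^ (2 * m - k) = k ^ (2 * m - k) * (N ^ k * L ^ (2 * m - k)) := by ring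
    _ ≤ m ^ (2 * m) * (N ^ m * L ^ m) := Nat.mul_le_mul hkm hNL

theorem count_tuples_dependency_graph_general
    (m : ℕ) :
    ∃ C : ℕ, ∀ (I : Type) (_ : Fintype I) (_ : Nonempty I)
      (R : I → I → Prop) (_ : DecidableRel R) (L : ℕ),
      (∀ i, R i i) →
      (∀ i j, R i j → R j i) →
      L = Finset.univ.sup (fun i => (Finset.univ.filter (fun j => R i j)).card) →
      Set.ncard {f : Fin (2 * m) → I | ∀ a, ∃ b, b ≠ a ∧ R (f a) (f b)} ≤
        C * Fintype.card I ^ m * L ^ m := by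
  refine ⟨4 ^ m * m ^ (2 * m), fun I _ _ R _ L _ hR hL => ?_⟩
  classical
  have hrow (i : I) : #{j | R i j} ≤ L := hL ▸ le_sup (f := fun i => #{j | R i j}) (mem_univ i)
  have hLI : L ≤ Fintype.card I := hL ▸ Finset.sup_le fun i _ => card_le_univ _
  let small : Finset (Finset (Fin (2 * m))) := {S | #S ≤ m}
  have hcover : {f : Fin (2 * m) → I | ∀ a, ∃ b, b ≠ a ∧ R (f a) (f b)} ⊆
      ↑(small.biUnion (dominatedTuples R)) := fun f hf => by
    obtain ⟨S, hS, hdom⟩ := exists_dominating_of_forall_exists_ne hR hf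
    rw [Fintype.card_fin] at hS
    simp only [coe_biUnion, Set.mem_iUnion, mem_coe, small, dominatedTuples, mem_filter,
      mem_univ, true_and]
    exact ⟨S, by omega, hdom⟩
  calc _ ≤ #(small.biUnion (dominatedTuples R)) := by
        rw [← Set.ncard_coe_finset]
        exact Set.ncard_le_ncard hcover
    _ ≤ ∑ S ∈ small, #(dominatedTuples R S) := card_biUnion_le
    _ ≤ ∑ _S ∈ small, m ^ (2 * m) * (Fintype.card I ^ m * L ^ m) := 
        sum_le_sum fun S hS => calc
          #(dominatedTuples R S) ≤ _ := card_dominatedTuples_le R hrow S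
          _ ≤ _ := by
            rw [Fintype.card_fin]
            exact pow_mul_mul_pow_sub_le (mem_filter.1 hS).2 hLI
    _ ≤ 4 ^ m * (m ^ (2 * m) * (Fintype.card I ^ m * L ^ m)) := by
        rw [sum_const, smul_eq_mul]
        gcongr
        exact (card_le_univ _).trans_eq (by simp [pow_mul])
    _ = 4 ^ m * m ^ (2 * m) * Fintype.card I ^ m * L ^ m := by ring

/-- For every `m ≥ 1` there is a constant `C_m` such that for every finite
nonempty set `I` with a symmetric reflexive relation `R` in which every element is related to
at most `L` elements, the number of tuples `(i₁, …, i_{2m}) ∈ I^{2m}` in which every entry is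
`R`-related to some other entry is at most `C_m |I|^m L^m`. -/
theorem count_tuples_dependency_graph
    (m : ℕ) (hm : 0 < m) :
    ∃ C : ℕ, ∀ (I : Type) (_ : Fintype I) (_ : Nonempty I)
      (R : I → I → Prop) (_ : DecidableRel R) (L : ℕ),
      (∀ i, R i i) →
      (∀ i j, R i j → R j i) →
      L = Finset.univ.sup (fun i => (Finset.univ.filter (fun j => R i j)).card) →
      Set.ncard {f : Fin (2 * m) → I | ∀ a, ∃ b, b ≠ a ∧ R (f a) (f b)} ≤
        C * Fintype.card I ^ m * L ^ m :=
  count_tuples_dependency_graph_general m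
end
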